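/- Suppose 1/2 < q_B < q_A < 1, fix a positive integer N, and let w, w′ ∈ [0,1) with w < w′ and N ≥ max(N*(w), N*(w′)). Then equilibrium welfare is strictly increasing in the motivation weight in state A and strictly decreasing in state B: P[ Binom(2N+1, q_A·σ*_N(w′)) ≥ N+1 ] > P[ Binom(2N+1, q_A·σ*_N(w)) ≥ N+1 ], and P[ Binom(2N+1, 1 − (1−q_B)·σ*_N(w′)) ≥ N+1 ] < P[ Binom(2N+1, 1 − (1−q_B)·σ*_N(w)) ≥ N+1 ]. -/

import Mathlib

/-!
The majority-correct probability `P[Binom(2N+1, p) ≥ N+1]` is strictly increasing in `p` on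
`[0, 1]`: its derivative telescopes to `C(2N+1, N+1) (N+1) pᴺ (1-p)ᴺ`.
With `t = ψ(w)^{1/N} ∈ [0, 1)`, the mixing probability `σ*_N(w)` equals
`(q_A − t(1−q_B)) / (q_A² − t(1−q_B)²)`, which is strictly decreasing in `t`, while `ψ`, and
hence `t`, is strictly decreasing in `w`. So `σ*_N` increases with `w`, which raises the
state-`A` vote probability `q_A σ*` and lowers the state-`B` one `1 − (1−q_B) σ*`; both stay
in `[0, 1]` because `q_A σ* ≤ 1`.
-/

/-- `ψ(w) = (1−w)(1−q_B)/(q_A + w(1−q_B))`. -/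
noncomputable def psi (qA qB w : ℝ) : ℝ := (1 - w) * (1 - qB) / (qA + w * (1 - qB))

/-- `N*(w) = ⌈ log ψ(w) / log (q_A(1−q_A)/(q_B(1−q_B))) ⌉`. -/
noncomputable def Nstar (qA qB w : ℝ) : ℤ :=
  ⌈Real.log (psi qA qB w) / Real.log (qA * (1 - qA) / (qB * (1 - qB)))⌉

/-- `σ*_N(w) = (q_A − ψ(w)^{1/N}(1−q_B)) / (q_A² − ψ(w)^{1/N}(1−q_B)²)`. -/
noncomputable def sigmaStar (N : ℕ) (qA qB w : ℝ) : ℝ :=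
  (qA - psi qA qB w ^ ((1 : ℝ) / N) * (1 - qB)) /
    (qA ^ 2 - psi qA qB w ^ ((1 : ℝ) / N) * (1 - qB) ^ 2)

/-- `P[Binom(2N+1, p) ≥ N+1]`. -/
noncomputable def majProb (N : ℕ) (p : ℝ) : ℝ :=
  ∑ j ∈ Finset.Icc (N + 1) (2 * N + 1),
    (Nat.choose (2 * N + 1) j : ℝ) * p ^ j * (1 - p) ^ (2 * N + 1 - j)

open Finset

/-- The derivative is written as `g j - g (j + 1)` with `g i = C(n,i) i p^(i-1) (1-p)^(n-i)`,
so that sums over `j` telescope. -/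
theorem hasDerivAt_choose_mul_pow_mul_one_sub_pow (n j : ℕ) (p : ℝ) :
    HasDerivAt (fun x : ℝ => (n.choose j : ℝ) * x ^ j * (1 - x) ^ (n - j))
      ((n.choose j : ℝ) * j * p ^ (j - 1) * (1 - p) ^ (n - j) -
        (n.choose (j + 1) : ℝ) * (j + 1 : ℕ) * p ^ (j + 1 - 1) * (1 - p) ^ (n - (j + 1))) p := by
  have hchoose : (n.choose (j + 1) : ℝ) * (j + 1 : ℕ) = n.choose j * (n - j : ℕ) := by
    exact_mod_cast Nat.choose_succ_right_eq n j
  have hx : HasDerivAt (fun x : ℝ => (1 - x) ^ (n - j))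
      ((n - j : ℕ) * (1 - p) ^ (n - j - 1) * (-1)) p :=
    (hasDerivAt_pow (n - j) (1 - p)).comp p ((hasDerivAt_id p).const_sub 1)
  refine (((hasDerivAt_pow j p).const_mul (n.choose j : ℝ)).fun_mul hx).congr_deriv ?_
  rw [Nat.add_sub_cancel, Nat.sub_add_eq]
  linear_combination (p ^ j * (1 - p) ^ (n - j - 1)) * hchoose

theorem hasDerivAt_sum_Icc_choose_mul_pow_mul_one_sub_pow {k n : ℕ} (hkn : k ≤ n) (p : ℝ) :
    HasDerivAt (fun x : ℝ => ∑ j ∈ Icc k n, (n.choose j : ℝ) * x ^ j * (1 - x) ^ (n - j))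
      ((n.choose k : ℝ) * k * p ^ (k - 1) * (1 - p) ^ (n - k)) p := by
  refine (HasDerivAt.fun_sum fun j _ =>
    hasDerivAt_choose_mul_pow_mul_one_sub_pow n j p).congr_deriv ?_
  set g : ℕ → ℝ := fun j => (n.choose j : ℝ) * j * p ^ (j - 1) * (1 - p) ^ (n - j)
  show ∑ i ∈ Icc k n, (g i - g (i + 1)) = g k
  have hg : g (n + 1) = 0 := by simp [g]
  calc ∑ i ∈ Icc k n, (g i - g (i + 1)) = -∑ i ∈ Icc k n, (g (i + 1) - g i) := by
        simp only [← sum_neg_distrib, neg_sub]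
    _ = g k := by rw [sum_Icc_sub hkn, hg, zero_sub, neg_neg]

theorem strictMonoOn_sum_Icc_choose_mul_pow_mul_one_sub_pow {k n : ℕ} (hk : 1 ≤ k)
    (hkn : k ≤ n) :
    StrictMonoOn (fun x : ℝ => ∑ j ∈ Icc k n, (n.choose j : ℝ) * x ^ j * (1 - x) ^ (n - j))
      (Set.Icc 0 1) := by
  have hderiv := hasDerivAt_sum_Icc_choose_mul_pow_mul_one_sub_pow hkn
  refine strictMonoOn_of_deriv_pos (convex_Icc 0 1)
    (fun x _ => (hderiv x).continuousAt.continuousWithinAt) fun x hx => ?_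
  rw [interior_Icc, Set.mem_Ioo] at hx
  obtain ⟨hx0, hx1⟩ := hx
  have hchoose : 0 < (n.choose k : ℝ) := by exact_mod_cast Nat.choose_pos hkn
  have hk' : 0 < (k : ℝ) := by exact_mod_cast hk
  have h1x : 0 < 1 - x := sub_pos.2 hx1
  rw [(hderiv x).deriv]
  positivity

theorem majProb_strictMonoOn (N : ℕ) : StrictMonoOn (majProb N) (Set.Icc 0 1) :=
  strictMonoOn_sum_Icc_choose_mul_pow_mul_one_sub_pow (by omega) (by omega)

/-- `sigmaStar N qA qB w` is definitionally `sigmaOfRoot qA (1 - qB) (psi qA qB w ^ (1 / N))`. -/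
noncomputable def sigmaOfRoot (a b t : ℝ) : ℝ := (a - t * b) / (a ^ 2 - t * b ^ 2)

section SigmaOfRoot

variable {a b : ℝ}

theorem sigmaOfRoot_denom_pos (hb : 0 < b) (hba : b < a) {t : ℝ} (ht : t < 1) :
    0 < a ^ 2 - t * b ^ 2 := by
  nlinarith [mul_lt_mul_of_pos_left hba hb, mul_lt_mul_of_pos_right ht (pow_pos hb 2)]

theorem sigmaOfRoot_pos (hb : 0 < b) (hba : b < a) {t : ℝ} (ht : t < 1) :
    0 < sigmaOfRoot a b t :=
  div_pos (by nlinarith [mul_lt_mul_of_pos_right ht hb]) (sigmaOfRoot_denom_pos hb hba ht)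

theorem mul_sigmaOfRoot_le_one (hb : 0 < b) (hba : b < a) {t : ℝ} (ht0 : 0 ≤ t) (ht1 : t < 1) :
    a * sigmaOfRoot a b t ≤ 1 := by
  rw [sigmaOfRoot, mul_div_assoc', div_le_one (sigmaOfRoot_denom_pos hb hba ht1)]
  nlinarith [mul_nonneg ht0 hb.le, hba]

theorem sigmaOfRoot_strictAntiOn (hb : 0 < b) (hba : b < a) :
    StrictAntiOn (sigmaOfRoot a b) (Set.Iio 1) := by
  intro s hs t ht hst
  rw [sigmaOfRoot, sigmaOfRoot,
    div_lt_div_iff₀ (sigmaOfRoot_denom_pos hb hba ht) (sigmaOfRoot_denom_pos hb hba hs)]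
  nlinarith [mul_pos (mul_pos (mul_pos (hb.trans hba) hb) (sub_pos.2 hba)) (sub_pos.2 hst)]

end SigmaOfRoot

section Equilibrium

variable {qA qB : ℝ}

theorem psi_pos (hqB : qB < 1) (hqA : 0 < qA) {w : ℝ} (hw0 : 0 ≤ w) (hw1 : w < 1) :
    0 < psi qA qB w := by
  have h1qB : 0 < 1 - qB := by linarith
  have h1w : 0 < 1 - w := by linarith
  unfold psi
  positivity

theorem psi_lt_one (hqB : qB < 1) (hqBA : 1 - qB < qA) {w : ℝ} (hw0 : 0 ≤ w) :
    psi qA qB w < 1 := by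
  rw [psi, div_lt_one (by nlinarith)]
  nlinarith

theorem psi_strictAntiOn (hqB : qB < 1) (hqA : 0 < qA) :
    StrictAntiOn (psi qA qB) (Set.Ici 0) := by
  intro w hw w' hw' hww'
  rw [Set.mem_Ici] at hw hw'
  rw [psi, psi, div_lt_div_iff₀ (by nlinarith) (by nlinarith)]
  nlinarith [mul_pos (mul_pos (sub_pos.2 hqB) (by linarith : 0 < qA + (1 - qB)))
    (sub_pos.2 hww')]

variable {N : ℕ}

theorem psi_rpow_mem_Ico (hN : 1 ≤ N) (hqB : qB < 1) (hqBA : 1 - qB < qA) {w : ℝ}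
    (hw : w ∈ Set.Ico 0 1) : psi qA qB w ^ ((1 : ℝ) / N) ∈ Set.Ico 0 1 := by
  have hpsi := psi_pos hqB (by linarith) hw.1 hw.2
  have hN' : (0 : ℝ) < 1 / N := by positivity
  exact ⟨Real.rpow_nonneg hpsi.le _, Real.rpow_lt_one hpsi.le (psi_lt_one hqB hqBA hw.1) hN'⟩

theorem sigmaStar_strictMonoOn (hN : 1 ≤ N) (hqB : qB < 1) (hqBA : 1 - qB < qA) :
    StrictMonoOn (sigmaStar N qA qB) (Set.Ico 0 1) := by
  intro w hw w' hw' hww'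
  have hN' : (0 : ℝ) < 1 / N := by positivity
  have hroot : psi qA qB w' ^ ((1 : ℝ) / N) < psi qA qB w ^ ((1 : ℝ) / N) :=
    Real.rpow_lt_rpow (psi_pos hqB (by linarith) hw'.1 hw'.2).le
      (psi_strictAntiOn hqB (by linarith) hw.1 hw'.1 hww') hN'
  exact sigmaOfRoot_strictAntiOn (sub_pos.2 hqB) hqBA
    (psi_rpow_mem_Ico hN hqB hqBA hw').2 (psi_rpow_mem_Ico hN hqB hqBA hw).2 hroot

theorem mul_sigmaStar_mem_Icc (hN : 1 ≤ N) (hqB : qB < 1) (hqBA : 1 - qB < qA) {w : ℝ}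
    (hw : w ∈ Set.Ico 0 1) : qA * sigmaStar N qA qB w ∈ Set.Icc 0 1 := by
  obtain ⟨ht0, ht1⟩ := psi_rpow_mem_Ico hN hqB hqBA hw
  exact ⟨(mul_pos (by linarith) (sigmaOfRoot_pos (sub_pos.2 hqB) hqBA ht1)).le,
    mul_sigmaOfRoot_le_one (sub_pos.2 hqB) hqBA ht0 ht1⟩

theorem one_sub_mul_sigmaStar_mem_Icc (hN : 1 ≤ N) (hqB : qB < 1) (hqBA : 1 - qB < qA) {w : ℝ}
    (hw : w ∈ Set.Ico 0 1) : 1 - (1 - qB) * sigmaStar N qA qB w ∈ Set.Icc 0 1 := by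
  have hσ : 0 < sigmaStar N qA qB w :=
    sigmaOfRoot_pos (sub_pos.2 hqB) hqBA (psi_rpow_mem_Ico hN hqB hqBA hw).2
  have hAσ := (mul_sigmaStar_mem_Icc hN hqB hqBA hw).2
  constructor <;> nlinarith [mul_lt_mul_of_pos_right hqBA hσ, mul_pos (sub_pos.2 hqB) hσ]

end Equilibrium

theorem condorcet_welfare_comparative_statics_general (qA qB : ℝ)
    (hqB : 1 / 2 < qB) (hqBA : qB < qA) (hqA : qA < 1)
    (N : ℕ) (hN : 1 ≤ N) (w w' : ℝ)
    (hw0 : 0 ≤ w) (hww' : w < w') (hw'1 : w' < 1) :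
    majProb N (qA * sigmaStar N qA qB w) < majProb N (qA * sigmaStar N qA qB w') ∧
    majProb N (1 - (1 - qB) * sigmaStar N qA qB w') <
      majProb N (1 - (1 - qB) * sigmaStar N qA qB w) := by
  have hqB1 : qB < 1 := hqBA.trans hqA
  have hqBA' : 1 - qB < qA := by linarith
  have hw : w ∈ Set.Ico 0 1 := ⟨hw0, hww'.trans hw'1⟩
  have hw' : w' ∈ Set.Ico 0 1 := ⟨hw0.trans hww'.le, hw'1⟩
  have hσ := sigmaStar_strictMonoOn hN hqB1 hqBA' hw hw' hww'
  exact ⟨majProb_strictMonoOn N (mul_sigmaStar_mem_Icc hN hqB1 hqBA' hw)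
      (mul_sigmaStar_mem_Icc hN hqB1 hqBA' hw') (mul_lt_mul_of_pos_left hσ (by linarith)),
    majProb_strictMonoOn N (one_sub_mul_sigmaStar_mem_Icc hN hqB1 hqBA' hw')
      (one_sub_mul_sigmaStar_mem_Icc hN hqB1 hqBA' hw) (by gcongr)⟩

/-- **Proposition 2(ii)** (welfare comparative statics): for `N ≥ max(N*(w), N*(w′))` and
`w < w′`, equilibrium welfare is strictly larger under `w′` in state `A` and strictly
smaller under `w′` in state `B`. -/
theorem condorcet_welfare_comparative_statics (qA qB : ℝ)
    (hqB : 1 / 2 < qB) (hqBA : qB < qA) (hqA : qA < 1)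
    (N : ℕ) (hN : 1 ≤ N) (w w' : ℝ)
    (hw0 : 0 ≤ w) (hww' : w < w') (hw'1 : w' < 1)
    (hNw : Nstar qA qB w ≤ (N : ℤ)) (hNw' : Nstar qA qB w' ≤ (N : ℤ)) :
    majProb N (qA * sigmaStar N qA qB w) < majProb N (qA * sigmaStar N qA qB w') ∧
    majProb N (1 - (1 - qB) * sigmaStar N qA qB w') <
      majProb N (1 - (1 - qB) * sigmaStar N qA qB w) :=
  condorcet_welfare_comparative_statics_general qA qB hqB hqBA hqA N hN w w' hw0 hww' hw'1
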